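/- For every fixed integer k ≥ 0, there exists a constant C > 0 such that for every integer N ≥ 1, with h = 1/N, one has max_{0 ≤ i ≤ N} |Ψ_k(t_i) − ψ_k(t_i)| ≤ C h². -/

import Mathlib

/-!
Induction on `k`. The continuous iterates `ψ_k` are `C²` on `[0,1]`: for `t ∈ [0,1]`,
`∫₀¹ G(t,s) ψ(s) ds = t²/2 ∫₀¹ (s-1) ψ(s) ds + ½ ∫₀ᵗ (t-s)² ψ(s) ds`, a `C²` function of `t`,
and `C²` is preserved by composition with `φ` and `f`. For fixed `t` the integrand
`s ↦ G(t,s) ψ_k(s)` is only `C¹` (`G(t,·)` has a kink at `s = t`), but its derivative is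
Lipschitz uniformly in `t`, which is enough for an `O(h²)` trapezoidal error. As `|G| ≤ 1` and
the trapezoidal weights sum to `1`, the rule applied to `Ψ_k - ψ_k` contributes at most the
previous error, and the Lipschitz bound on `f` carries the sum over to `Ψ_{k+1} - ψ_{k+1}`.
-/

open Set MeasureTheory

/-- The Green function of the problem `u''' = ψ`, `u(0) = u'(0) = u'(1) = 0` on `[0,1]`. -/
noncomputable def G01 (t s : ℝ) : ℝ :=
  if s ≤ t then s / 2 * (t ^ 2 - 2 * t + s) else t ^ 2 / 2 * (s - 1)

/-- The quadratic polynomial with `g(0) = b1`, `g'(0) = b2`, `g'(1) = b3`. -/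
noncomputable def gq (b1 b2 b3 t : ℝ) : ℝ := b1 + b2 * t + (b3 - b2) / 2 * t ^ 2

/-- Trapezoidal weights: `ρ_0 = ρ_N = 1/2` and `ρ_j = 1` for `1 ≤ j ≤ N − 1`. -/
noncomputable def trapWeight (N j : ℕ) : ℝ := if j = 0 ∨ j = N then 1 / 2 else 1

/-- Continuous iteration: `ψ₀(t) = f(t,0,0)`, `ψ_{k+1}(t) = f(t, u_k(t), v_k(t))`, where
`u_k(t) = g(t) + ∫₀¹ G(t,s) ψ_k(s) ds` and `v_k(t) = u_k(φ(t))`. -/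
noncomputable def psiC (f : ℝ → ℝ → ℝ → ℝ) (φ : ℝ → ℝ) (b1 b2 b3 : ℝ) : ℕ → ℝ → ℝ
  | 0 => fun t => f t 0 0
  | k + 1 => fun t =>
      f t (gq b1 b2 b3 t + ∫ s in (0:ℝ)..1, G01 t s * psiC f φ b1 b2 b3 k s)
        (gq b1 b2 b3 (φ t) + ∫ s in (0:ℝ)..1, G01 (φ t) s * psiC f φ b1 b2 b3 k s)

/-- `u_k(t) = g(t) + ∫₀¹ G(t,s) ψ_k(s) ds`. -/
noncomputable def uC (f : ℝ → ℝ → ℝ → ℝ) (φ : ℝ → ℝ) (b1 b2 b3 : ℝ) (k : ℕ) (t : ℝ) : ℝ :=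
  gq b1 b2 b3 t + ∫ s in (0:ℝ)..1, G01 t s * psiC f φ b1 b2 b3 k s

/-- `v_k(t) = u_k(φ(t))`. -/
noncomputable def vC (f : ℝ → ℝ → ℝ → ℝ) (φ : ℝ → ℝ) (b1 b2 b3 : ℝ) (k : ℕ) (t : ℝ) : ℝ :=
  uC f φ b1 b2 b3 k (φ t)

/-- Discrete iteration: `Ψ₀(t_i) = f(t_i,0,0)`,
`Ψ_{k+1}(t_i) = f(t_i, U_k(t_i), V_k(t_i))`, where `U_k`, `V_k` are trapezoidal
approximations of `u_k`, `v_k` on the uniform grid `t_i = i/N`. -/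
noncomputable def PsiD (f : ℝ → ℝ → ℝ → ℝ) (φ : ℝ → ℝ) (b1 b2 b3 : ℝ) (N : ℕ) :
    ℕ → ℕ → ℝ
  | 0 => fun i => f ((i : ℝ) / N) 0 0
  | k + 1 => fun i =>
      f ((i : ℝ) / N)
        (gq b1 b2 b3 ((i : ℝ) / N) + ∑ j ∈ Finset.range (N + 1),
          (1 / (N:ℝ)) * trapWeight N j * G01 ((i : ℝ) / N) ((j : ℝ) / N) *
            PsiD f φ b1 b2 b3 N k j)
        (gq b1 b2 b3 (φ ((i : ℝ) / N)) + ∑ j ∈ Finset.range (N + 1),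
          (1 / (N:ℝ)) * trapWeight N j * G01 (φ ((i : ℝ) / N)) ((j : ℝ) / N) *
            PsiD f φ b1 b2 b3 N k j)

/-- `U_k(t_i) = g(t_i) + Σ_j h ρ_j G(t_i, t_j) Ψ_k(t_j)`. -/
noncomputable def UD (f : ℝ → ℝ → ℝ → ℝ) (φ : ℝ → ℝ) (b1 b2 b3 : ℝ) (N k i : ℕ) : ℝ :=
  gq b1 b2 b3 ((i : ℝ) / N) + ∑ j ∈ Finset.range (N + 1),
    (1 / (N:ℝ)) * trapWeight N j * G01 ((i : ℝ) / N) ((j : ℝ) / N) * PsiD f φ b1 b2 b3 N k j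

/-- `V_k(t_i) = g(ξ_i) + Σ_j h ρ_j G(ξ_i, t_j) Ψ_k(t_j)`, with `ξ_i = φ(t_i)`. -/
noncomputable def VD (f : ℝ → ℝ → ℝ → ℝ) (φ : ℝ → ℝ) (b1 b2 b3 : ℝ) (N k i : ℕ) : ℝ :=
  gq b1 b2 b3 (φ ((i : ℝ) / N)) + ∑ j ∈ Finset.range (N + 1),
    (1 / (N:ℝ)) * trapWeight N j * G01 (φ ((i : ℝ) / N)) ((j : ℝ) / N) *
      PsiD f φ b1 b2 b3 N k j

open scoped NNReal

lemma LipschitzOnWith.mul_of_norm_le {α R : Type*} [PseudoMetricSpace α] [SeminormedRing R]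
    {f g : α → R} {s : Set α} {Kf Kg A B : ℝ≥0} (hf : LipschitzOnWith Kf f s)
    (hg : LipschitzOnWith Kg g s) (hfA : ∀ x ∈ s, ‖f x‖ ≤ A) (hgB : ∀ x ∈ s, ‖g x‖ ≤ B) :
    LipschitzOnWith (A * Kg + B * Kf) (fun x => f x * g x) s := by
  refine LipschitzOnWith.of_dist_le_mul fun x hx y hy => ?_
  have hfxy := hf.dist_le_mul x hx y hy
  have hgxy := hg.dist_le_mul x hx y hy
  rw [dist_eq_norm] at hfxy hgxy ⊢
  calc ‖f x * g x - f y * g y‖ = ‖f x * (g x - g y) + (f x - f y) * g y‖ := by noncomm_ring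
    _ ≤ ‖f x‖ * ‖g x - g y‖ + ‖f x - f y‖ * ‖g y‖ :=
      (norm_add_le _ _).trans (add_le_add (norm_mul_le _ _) (norm_mul_le _ _))
    _ ≤ A * (Kg * dist x y) + Kf * dist x y * B := by
      gcongr
      exacts [hfA x hx, hgB y hy]
    _ = ↑(A * Kg + B * Kf) * dist x y := by push_cast; ring

lemma hasDerivAt_max_zero_sq (x : ℝ) : HasDerivAt (fun y : ℝ => max y 0 ^ 2) (2 * max x 0) x := by
  rcases lt_trichotomy x 0 with hx | rfl | hx
  · rw [max_eq_right hx.le, mul_zero]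
    refine (hasDerivAt_const x (0 : ℝ)).congr_of_eventuallyEq ?_
    filter_upwards [eventually_lt_nhds hx] with y hy
    simp [max_eq_right hy.le]
  · rw [max_self, mul_zero, ← hasDerivWithinAt_univ, ← Iic_union_Ici (a := (0 : ℝ))]
    refine HasDerivWithinAt.union ?_ ?_
    · exact (hasDerivWithinAt_const 0 _ (0 : ℝ)).congr
        (fun y (hy : y ≤ 0) => by simp [max_eq_right hy]) (by simp)
    · exact ((hasDerivAt_pow 2 (0 : ℝ)).hasDerivWithinAt.congr (fun y hy => by
        simp [max_eq_left (show (0 : ℝ) ≤ y from hy)]) (by simp)).congr_deriv (by simp)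
  · rw [max_eq_left hx.le]
    refine ((hasDerivAt_pow 2 x).congr_of_eventuallyEq ?_).congr_deriv (by simp)
    filter_upwards [eventually_gt_nhds hx] with y hy
    rw [max_eq_left hy.le]

lemma G01_eq (t s : ℝ) : G01 t s = t ^ 2 * (s - 1) / 2 + max (t - s) 0 ^ 2 / 2 := by
  unfold G01
  split_ifs with h
  · rw [max_eq_left (by linarith)]; ring
  · rw [max_eq_right (by linarith)]; ring

noncomputable def G01Deriv (t s : ℝ) : ℝ := t ^ 2 / 2 - max (t - s) 0

lemma hasDerivAt_G01 (t s : ℝ) : HasDerivAt (G01 t) (G01Deriv t s) s := by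
  have hmax := (hasDerivAt_max_zero_sq (t - s)).comp s ((hasDerivAt_id s).const_sub t)
  have := (((hasDerivAt_id s).sub_const 1).const_mul (t ^ 2)).div_const 2 |>.add
    (hmax.div_const 2)
  rw [show G01 t = _ from funext (G01_eq t)]
  exact this.congr_deriv (by simp only [G01Deriv]; ring)

lemma continuous_G01 (t : ℝ) : Continuous (G01 t) := by
  rw [show G01 t = _ from funext (G01_eq t)]
  fun_prop

lemma abs_G01_le {t s : ℝ} (ht : t ∈ Icc (0 : ℝ) 1) (hs : s ∈ Icc (0 : ℝ) 1) :
    |G01 t s| ≤ 1 := by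
  obtain ⟨ht0, ht1⟩ := ht
  obtain ⟨hs0, hs1⟩ := hs
  have hm : max (t - s) 0 ≤ 1 := max_le (by linarith) zero_le_one
  have hm0 : 0 ≤ max (t - s) 0 := le_max_right _ _
  rw [G01_eq, abs_le]
  constructor <;> nlinarith [mul_nonneg (sq_nonneg t) (sub_nonneg.2 hs1)]

lemma abs_G01Deriv_le {t s : ℝ} (ht : t ∈ Icc (0 : ℝ) 1) (hs : s ∈ Icc (0 : ℝ) 1) :
    |G01Deriv t s| ≤ 1 := by
  obtain ⟨ht0, ht1⟩ := ht
  have hm : max (t - s) 0 ≤ 1 := max_le (by linarith [hs.1]) zero_le_one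
  have hm0 : 0 ≤ max (t - s) 0 := le_max_right _ _
  rw [G01Deriv, abs_le]
  constructor <;> nlinarith

lemma lipschitzWith_G01Deriv (t : ℝ) : LipschitzWith 1 (G01Deriv t) :=
  LipschitzWith.of_dist_le_mul fun x y => by
    simp only [G01Deriv, Real.dist_eq, NNReal.coe_one, one_mul]
    calc |t ^ 2 / 2 - max (t - x) 0 - (t ^ 2 / 2 - max (t - y) 0)|
        = |max (t - y) 0 - max (t - x) 0| := by rw [sub_sub_sub_cancel_left]
      _ ≤ |t - y - (t - x)| := abs_max_sub_max_le_abs _ _ _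
      _ = |x - y| := by rw [sub_sub_sub_cancel_left]

lemma lipschitzOnWith_G01 {t : ℝ} (ht : t ∈ Icc (0 : ℝ) 1) :
    LipschitzOnWith 1 (G01 t) (Icc 0 1) :=
  (convex_Icc 0 1).lipschitzOnWith_of_nnnorm_hasDerivWithin_le
    (fun s _ => (hasDerivAt_G01 t s).hasDerivWithinAt)
    fun s hs => by
      rw [← NNReal.coe_le_coe, coe_nnnorm, Real.norm_eq_abs]
      exact abs_G01Deriv_le ht hs

-- Integrate `∫ g = ∫ (s - m)' g` by parts, `m` the midpoint, and use `∫ (s - m) g'(m) ds = 0`.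
lemma abs_integral_sub_trapezoid_le {g g' : ℝ → ℝ} {a b : ℝ} {K : ℝ≥0} (hab : a ≤ b)
    (hg : ContinuousOn g (Icc a b)) (hgg' : ∀ x ∈ Ioo a b, HasDerivAt g (g' x) x)
    (hg' : LipschitzOnWith K g' (Icc a b)) :
    |(∫ s in a..b, g s) - (b - a) * (g a + g b) / 2| ≤ K * (b - a) ^ 3 := by
  set m := (a + b) / 2 with hm_def
  have hm : m ∈ Icc a b := ⟨by linarith, by linarith⟩
  rw [← uIcc_of_le hab] at hg hg'
  have hparts : ∫ s in a..b, (1 * g s + (s - m) * g' s) = (b - m) * g b - (a - m) * g a :=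
    intervalIntegral.integral_deriv_mul_eq_sub_of_hasDerivAt (by fun_prop) hg
      (fun x _ => (hasDerivAt_id x).sub_const m) (fun x hx => hgg' x (by
        rwa [min_eq_left hab, max_eq_right hab] at hx))
      intervalIntegrable_const (hg'.continuousOn.intervalIntegrable)
  have hmid : ∫ s in a..b, (s - m) * g' m = 0 := by
    simp only [intervalIntegral.integral_mul_const, intervalIntegral.integral_comp_sub_right
      (fun s => s), integral_id, hm_def, mul_eq_zero]
    exact Or.inl (by ring)
  have hgi : IntervalIntegrable g volume a b := hg.intervalIntegrable
  have hg'i : IntervalIntegrable (fun s => (s - m) * g' s) volume a b :=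
    ((continuousOn_id.sub continuousOn_const).mul hg'.continuousOn).intervalIntegrable
  have herr : (∫ s in a..b, g s) - (b - a) * (g a + g b) / 2
      = -∫ s in a..b, (s - m) * (g' s - g' m) := by
    simp only [one_mul] at hparts
    simp only [mul_sub]
    rw [intervalIntegral.integral_add hgi hg'i] at hparts
    rw [intervalIntegral.integral_sub hg'i (Continuous.intervalIntegrable (by fun_prop) a b), hmid]
    linear_combination hparts
  have hbound : ∀ x ∈ uIoc a b, ‖(x - m) * (g' x - g' m)‖ ≤ K * (b - a) ^ 2 := by
    intro x hx
    rw [uIoc_of_le hab] at hx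
    have hxm : |x - m| ≤ b - a := abs_sub_le_iff.2 ⟨by linarith [hx.2], by linarith [hx.1]⟩
    have hx' : x ∈ uIcc a b := by rw [uIcc_of_le hab]; exact Ioc_subset_Icc_self hx
    have hm' : m ∈ uIcc a b := by rwa [uIcc_of_le hab]
    have hlip : |g' x - g' m| ≤ K * |x - m| := by
      simpa [Real.dist_eq] using hg'.dist_le_mul x hx' m hm'
    rw [Real.norm_eq_abs, abs_mul]
    calc |x - m| * |g' x - g' m| ≤ |x - m| * (K * |x - m|) := by gcongr
      _ ≤ (b - a) * (K * (b - a)) := by gcongr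
      _ = K * (b - a) ^ 2 := by ring
  rw [herr, abs_neg, ← Real.norm_eq_abs]
  refine (intervalIntegral.norm_integral_le_of_norm_le_const hbound).trans_eq ?_
  rw [abs_of_nonneg (sub_nonneg.2 hab)]
  ring

noncomputable def trapSum (N : ℕ) (a : ℕ → ℝ) : ℝ :=
  ∑ j ∈ Finset.range (N + 1), 1 / (N : ℝ) * trapWeight N j * a j

lemma trapSum_eq_sum_panels {N : ℕ} (hN : N ≠ 0) (a : ℕ → ℝ) :
    trapSum N a = ∑ j ∈ Finset.range N, (a j + a (j + 1)) / (2 * N) := by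
  obtain ⟨n, rfl⟩ := Nat.exists_eq_succ_of_ne_zero hN
  have hmid : ∀ j ∈ Finset.range n, trapWeight (n + 1) (j + 1) = 1 := fun j hj => by
    simp only [trapWeight, Finset.mem_range] at hj ⊢
    rw [if_neg (by omega)]
  have hends : trapWeight (n + 1) 0 = 1 / 2 ∧ trapWeight (n + 1) (n + 1) = 1 / 2 := by
    simp [trapWeight]
  rw [trapSum, Finset.sum_range_succ, Finset.sum_range_succ', Finset.sum_congr rfl
    fun j hj => by rw [hmid j hj], hends.1, hends.2]
  simp only [add_div, Finset.sum_add_distrib]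
  rw [Finset.sum_range_succ' (fun j => a j / _), Finset.sum_range_succ (fun j => a (j + 1) / _),
    ← Finset.mul_sum, ← Finset.sum_div]
  field_simp
  ring

lemma trapSum_sub (N : ℕ) (a b : ℕ → ℝ) : trapSum N a - trapSum N b = trapSum N (a - b) := by
  simp only [trapSum, ← Finset.sum_sub_distrib, Pi.sub_apply, mul_sub]

lemma abs_trapSum_le {N : ℕ} (hN : N ≠ 0) {a : ℕ → ℝ} {c : ℝ} (ha : ∀ j ≤ N, |a j| ≤ c) :
    |trapSum N a| ≤ c := by
  have hN' : (0 : ℝ) < N := Nat.cast_pos.2 (Nat.pos_of_ne_zero hN)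
  rw [trapSum_eq_sum_panels hN]
  refine (Finset.abs_sum_le_sum_abs _ _).trans ?_
  calc ∑ j ∈ Finset.range N, |(a j + a (j + 1)) / (2 * N)|
      ≤ ∑ j ∈ Finset.range N, (c + c) / (2 * N) := Finset.sum_le_sum fun j hj => by
        have hj := Finset.mem_range.1 hj
        rw [abs_div, abs_of_pos (show (0 : ℝ) < 2 * N by linarith)]
        exact div_le_div_of_nonneg_right
          ((abs_add_le _ _).trans (add_le_add (ha j hj.le) (ha (j + 1) hj))) (by linarith)
    _ = c := by rw [Finset.sum_const, Finset.card_range, nsmul_eq_mul]; field_simp; ring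

lemma natCast_div_mem_Icc {N j : ℕ} (hj : j ≤ N) : (j : ℝ) / N ∈ Icc (0 : ℝ) 1 :=
  ⟨by positivity, div_le_one_of_le₀ (by exact_mod_cast hj) (by positivity)⟩

lemma abs_trapSum_sub_integral_le {g g' : ℝ → ℝ} {K : ℝ≥0} {N : ℕ} (hN : N ≠ 0)
    (hg : ContinuousOn g (Icc 0 1)) (hgg' : ∀ x ∈ Ioo (0 : ℝ) 1, HasDerivAt g (g' x) x)
    (hg' : LipschitzOnWith K g' (Icc 0 1)) :
    |trapSum N (fun j => g (j / N)) - ∫ s in (0 : ℝ)..1, g s| ≤ K * (1 / (N : ℝ)) ^ 2 := by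
  have hN' : (0 : ℝ) < N := Nat.cast_pos.2 (Nat.pos_of_ne_zero hN)
  have hpanel : ∀ j < N, (j : ℝ) / N ≤ ((j + 1 : ℕ) : ℝ) / N ∧
      0 ≤ (j : ℝ) / N ∧ ((j + 1 : ℕ) : ℝ) / N ≤ 1 ∧
      ((j + 1 : ℕ) : ℝ) / N - (j : ℝ) / N = 1 / N := fun j hj =>
    ⟨by gcongr; omega, (natCast_div_mem_Icc hj.le).1, (natCast_div_mem_Icc hj).2,
      by push_cast; ring⟩
  have hint : ∫ s in (0 : ℝ)..1, g s
      = ∑ j ∈ Finset.range N, ∫ s in ((j : ℝ) / N)..(((j + 1 : ℕ) : ℝ) / N), g s := by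
    rw [intervalIntegral.sum_integral_adjacent_intervals fun j hj =>
      (hg.mono ?_).intervalIntegrable]
    · simp [hN'.ne']
    · rw [uIcc_of_le (hpanel j hj).1]
      exact Icc_subset_Icc (hpanel j hj).2.1 (hpanel j hj).2.2.1
  have hpanel_err : ∀ j ∈ Finset.range N,
      |(g (j / N) + g ((j + 1 : ℕ) / N)) / (2 * N)
        - ∫ s in ((j : ℝ) / N)..(((j + 1 : ℕ) : ℝ) / N), g s| ≤ K * (1 / (N : ℝ)) ^ 3 := by
    intro j hj
    obtain ⟨hle, hlo, hhi, hlen⟩ := hpanel j (Finset.mem_range.1 hj)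
    have hsub := Icc_subset_Icc hlo hhi
    have := abs_integral_sub_trapezoid_le hle (hg.mono hsub)
      (fun x hx => hgg' x (Ioo_subset_Ioo hlo hhi hx)) (hg'.mono hsub)
    rw [hlen, abs_sub_comm] at this
    convert this using 3
    field_simp
  rw [trapSum_eq_sum_panels hN, hint, ← Finset.sum_sub_distrib]
  refine (Finset.abs_sum_le_sum_abs _ _).trans ((Finset.sum_le_sum hpanel_err).trans_eq ?_)
  rw [Finset.sum_const, Finset.card_range, nsmul_eq_mul]
  field_simp

lemma exists_abs_trapSum_G01_mul_sub_integral_le {ψ : ℝ → ℝ}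
    (hψ : ContDiffOn ℝ 2 ψ (Icc 0 1)) :
    ∃ M : ℝ≥0, ∀ t ∈ Icc (0 : ℝ) 1, ∀ N : ℕ, N ≠ 0 →
      |trapSum N (fun j => G01 t (j / N) * ψ (j / N)) - ∫ s in (0 : ℝ)..1, G01 t s * ψ s|
        ≤ M * (1 / (N : ℝ)) ^ 2 := by
  set ψ' := derivWithin ψ (Icc 0 1)
  have hψ' : ContDiffOn ℝ 1 ψ' (Icc 0 1) :=
    hψ.derivWithin (uniqueDiffOn_Icc zero_lt_one) (by norm_num)
  obtain ⟨K0, hK0⟩ := hψ.exists_lipschitzOnWith two_ne_zero (convex_Icc 0 1) isCompact_Icc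
  obtain ⟨K1, hK1⟩ := hψ'.exists_lipschitzOnWith one_ne_zero (convex_Icc 0 1) isCompact_Icc
  obtain ⟨A, hA⟩ := isCompact_Icc.exists_bound_of_continuousOn hψ.continuousOn
  obtain ⟨B, hB⟩ := isCompact_Icc.exists_bound_of_continuousOn hψ'.continuousOn
  refine ⟨(1 * K0 + A.toNNReal * 1) + (1 * K1 + B.toNNReal * 1), fun t ht N hN => ?_⟩
  refine abs_trapSum_sub_integral_le hN ((continuous_G01 t).continuousOn.mul hψ.continuousOn)
    (g' := fun s => G01Deriv t s * ψ s + G01 t s * ψ' s) (fun x hx => ?_) ?_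
  · have hψx : HasDerivAt ψ (ψ' x) x :=
      ((hψ.differentiableOn two_ne_zero x (Ioo_subset_Icc_self hx)).hasDerivWithinAt).hasDerivAt
        (Icc_mem_nhds hx.1 hx.2)
    exact (hasDerivAt_G01 t x).mul hψx
  · have hG : ∀ s ∈ Icc (0 : ℝ) 1, ‖G01 t s‖ ≤ (1 : ℝ≥0) := fun s hs => by
      simpa using abs_G01_le ht hs
    have hG' : ∀ s ∈ Icc (0 : ℝ) 1, ‖G01Deriv t s‖ ≤ (1 : ℝ≥0) := fun s hs => by
      simpa using abs_G01Deriv_le ht hs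
    exact ((lipschitzWith_G01Deriv t).lipschitzOnWith.mul_of_norm_le hK0 hG'
      fun x hx => (hA x hx).trans (Real.le_coe_toNNReal A)).add
      ((lipschitzOnWith_G01 ht).mul_of_norm_le hK1 hG
        fun x hx => (hB x hx).trans (Real.le_coe_toNNReal B))

lemma abs_trapSum_G01_mul_sub_integral_le {ψ : ℝ → ℝ} {Ψ : ℕ → ℝ} {M ε : ℝ} {N : ℕ}
    (hN : N ≠ 0) {t : ℝ} (ht : t ∈ Icc (0 : ℝ) 1)
    (hquad : |trapSum N (fun j => G01 t (j / N) * ψ (j / N)) - ∫ s in (0 : ℝ)..1, G01 t s * ψ s|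
      ≤ M)
    (hΨ : ∀ j ≤ N, |Ψ j - ψ (j / N)| ≤ ε) :
    |trapSum N (fun j => G01 t (j / N) * Ψ j) - ∫ s in (0 : ℝ)..1, G01 t s * ψ s| ≤ ε + M := by
  have hstab : |trapSum N (fun j => G01 t (j / N) * (Ψ j - ψ (j / N)))| ≤ ε :=
    abs_trapSum_le hN fun j hj => by
      rw [abs_mul]
      exact (mul_le_of_le_one_left (abs_nonneg _) (abs_G01_le ht (natCast_div_mem_Icc hj))).trans
        (hΨ j hj)
  have hsplit : trapSum N (fun j => G01 t (j / N) * Ψ j) - ∫ s in (0 : ℝ)..1, G01 t s * ψ s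
      = trapSum N (fun j => G01 t (j / N) * (Ψ j - ψ (j / N)))
        + (trapSum N (fun j => G01 t (j / N) * ψ (j / N)) - ∫ s in (0 : ℝ)..1, G01 t s * ψ s) := by
    rw [← sub_add_sub_cancel _ (trapSum N fun j => G01 t (j / N) * ψ (j / N)), trapSum_sub]
    simp only [Pi.sub_def, mul_sub]
  rw [hsplit]
  exact (abs_add_le _ _).trans (add_le_add hstab hquad)

lemma contDiff_succ_of_hasDerivAt {F F' : ℝ → ℝ} {n : ℕ} (hF : ∀ t, HasDerivAt F (F' t) t)
    (hF' : ContDiff ℝ n F') : ContDiff ℝ (n + 1) F := by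
  rw [contDiff_succ_iff_deriv, show deriv F = F' from funext fun t => (hF t).deriv]
  exact ⟨fun t => (hF t).differentiableAt, by simp, hF'⟩

section RepeatedIntegral

variable {w : ℝ → ℝ}

lemma integral_sub_mul_eq (hw : Continuous w) (t : ℝ) :
    ∫ s in (0 : ℝ)..t, (t - s) * w s
      = t * (∫ s in (0 : ℝ)..t, w s) - ∫ s in (0 : ℝ)..t, s * w s := by
  simp only [sub_mul]
  rw [intervalIntegral.integral_sub (Continuous.intervalIntegrable (by fun_prop) _ _)
    (Continuous.intervalIntegrable (by fun_prop) _ _), intervalIntegral.integral_const_mul]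

lemma integral_sub_sq_mul_eq (hw : Continuous w) (t : ℝ) :
    ∫ s in (0 : ℝ)..t, (t - s) ^ 2 * w s
      = t ^ 2 * (∫ s in (0 : ℝ)..t, w s) - 2 * t * (∫ s in (0 : ℝ)..t, s * w s)
        + ∫ s in (0 : ℝ)..t, s ^ 2 * w s := by
  simp only [show ∀ s, (t - s) ^ 2 * w s = t ^ 2 * w s - 2 * t * (s * w s) + s ^ 2 * w s
    from fun s => by ring]
  rw [intervalIntegral.integral_add (Continuous.intervalIntegrable (by fun_prop) _ _)
    (Continuous.intervalIntegrable (by fun_prop) _ _),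
    intervalIntegral.integral_sub (Continuous.intervalIntegrable (by fun_prop) _ _)
    (Continuous.intervalIntegrable (by fun_prop) _ _),
    intervalIntegral.integral_const_mul, intervalIntegral.integral_const_mul]

lemma hasDerivAt_integral_sub_mul (hw : Continuous w) (t : ℝ) :
    HasDerivAt (fun t => ∫ s in (0 : ℝ)..t, (t - s) * w s) (∫ s in (0 : ℝ)..t, w s) t := by
  have hP := (hw.integral_hasStrictDerivAt 0 t).hasDerivAt
  have hQ := ((show Continuous fun s => s * w s by fun_prop).integral_hasStrictDerivAt
    0 t).hasDerivAt
  rw [funext (integral_sub_mul_eq hw)]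
  exact ((hasDerivAt_id t).mul hP).sub hQ |>.congr_deriv (by simp only [id]; ring)

lemma hasDerivAt_integral_sub_sq_mul (hw : Continuous w) (t : ℝ) :
    HasDerivAt (fun t => ∫ s in (0 : ℝ)..t, (t - s) ^ 2 * w s)
      (2 * ∫ s in (0 : ℝ)..t, (t - s) * w s) t := by
  have hP := (hw.integral_hasStrictDerivAt 0 t).hasDerivAt
  have hQ := ((show Continuous fun s => s * w s by fun_prop).integral_hasStrictDerivAt
    0 t).hasDerivAt
  have hR := ((show Continuous fun s => s ^ 2 * w s by fun_prop).integral_hasStrictDerivAt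
    0 t).hasDerivAt
  rw [funext (integral_sub_sq_mul_eq hw), integral_sub_mul_eq hw]
  exact (((hasDerivAt_pow 2 t).mul hP).sub (((hasDerivAt_id t).const_mul 2).mul hQ)).add hR
    |>.congr_deriv (by simp only [id]; ring)

lemma contDiff_integral_sub_sq_mul (hw : Continuous w) :
    ContDiff ℝ 2 (fun t => ∫ s in (0 : ℝ)..t, (t - s) ^ 2 * w s) := by
  have h1 : ContDiff ℝ 1 (fun t => ∫ s in (0 : ℝ)..t, (t - s) * w s) :=
    contDiff_succ_of_hasDerivAt (n := 0) (hasDerivAt_integral_sub_mul hw)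
      (contDiff_zero.2 (intervalIntegral.continuous_primitive hw.intervalIntegrable 0))
  exact contDiff_succ_of_hasDerivAt (n := 1) (hasDerivAt_integral_sub_sq_mul hw)
    (contDiff_const.mul h1)

end RepeatedIntegral

lemma integral_G01_mul_eq {w : ℝ → ℝ} (hw : Continuous w) {t : ℝ} (ht : t ∈ Icc (0 : ℝ) 1) :
    ∫ s in (0 : ℝ)..1, G01 t s * w s
      = t ^ 2 / 2 * (∫ s in (0 : ℝ)..1, (s - 1) * w s)
        + (∫ s in (0 : ℝ)..t, (t - s) ^ 2 * w s) / 2 := by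
  have hmax : ∫ s in (0 : ℝ)..1, max (t - s) 0 ^ 2 * w s
      = ∫ s in (0 : ℝ)..t, (t - s) ^ 2 * w s := by
    rw [← intervalIntegral.integral_add_adjacent_intervals (b := t)
      (Continuous.intervalIntegrable (by fun_prop) _ _)
      (Continuous.intervalIntegrable (by fun_prop) _ _)]
    have hleft : ∫ s in (0 : ℝ)..t, max (t - s) 0 ^ 2 * w s
        = ∫ s in (0 : ℝ)..t, (t - s) ^ 2 * w s := intervalIntegral.integral_congr fun s hs => by
      rw [uIcc_of_le ht.1] at hs; simp [max_eq_left (sub_nonneg.2 hs.2)]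
    have hright : ∫ s in t..(1 : ℝ), max (t - s) 0 ^ 2 * w s = 0 :=
      (intervalIntegral.integral_congr (g := fun _ => 0) fun s hs => by
        rw [uIcc_of_le ht.2] at hs; simp [max_eq_right (sub_nonpos.2 hs.1)]).trans
        intervalIntegral.integral_zero
    rw [hleft, hright, add_zero]
  calc ∫ s in (0 : ℝ)..1, G01 t s * w s
      = ∫ s in (0 : ℝ)..1, (t ^ 2 / 2 * ((s - 1) * w s) + max (t - s) 0 ^ 2 * w s / 2) :=
        intervalIntegral.integral_congr fun s _ => by simp only [G01_eq]; ring
    _ = _ := by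
      rw [intervalIntegral.integral_add (Continuous.intervalIntegrable (by fun_prop) _ _)
        (Continuous.intervalIntegrable (by fun_prop) _ _), intervalIntegral.integral_const_mul,
        intervalIntegral.integral_div, hmax]

lemma contDiffOn_integral_G01_mul {ψ : ℝ → ℝ} (hψ : ContinuousOn ψ (Icc 0 1)) :
    ContDiffOn ℝ 2 (fun t => ∫ s in (0 : ℝ)..1, G01 t s * ψ s) (Icc 0 1) := by
  -- a continuous extension of `ψ` to `ℝ`, so that the fundamental theorem of calculus applies
  set w : ℝ → ℝ := fun s => ψ (projIcc 0 1 zero_le_one s)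
  have hw : Continuous w :=
    hψ.comp_continuous (continuous_subtype_val.comp continuous_projIcc) fun s => Subtype.prop _
  have hψw : ∀ t, ∫ s in (0 : ℝ)..1, G01 t s * ψ s = ∫ s in (0 : ℝ)..1, G01 t s * w s :=
    fun t => intervalIntegral.integral_congr fun s hs => by
      rw [uIcc_of_le zero_le_one] at hs; simp [w, projIcc_of_mem _ hs]
  refine (ContDiff.contDiffOn ?_).congr fun t ht => (hψw t).trans (integral_G01_mul_eq hw ht)
  exact (((contDiff_id.pow 2).div_const 2).mul contDiff_const).add
    ((contDiff_integral_sub_sq_mul hw).div_const 2)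

section Iteration

variable {f : ℝ → ℝ → ℝ → ℝ} {φ : ℝ → ℝ} {b1 b2 b3 : ℝ}

lemma psiC_succ (k : ℕ) (t : ℝ) :
    psiC f φ b1 b2 b3 (k + 1) t = f t (uC f φ b1 b2 b3 k t) (vC f φ b1 b2 b3 k t) := rfl

lemma PsiD_succ (N k i : ℕ) :
    PsiD f φ b1 b2 b3 N (k + 1) i = f (i / N) (UD f φ b1 b2 b3 N k i) (VD f φ b1 b2 b3 N k i) :=
  rfl

lemma contDiffOn_psiC (hφ : ContDiffOn ℝ 2 φ (Icc 0 1)) (hφm : MapsTo φ (Icc 0 1) (Icc 0 1))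
    (hf : ContDiffOn ℝ 2 (fun p : ℝ × ℝ × ℝ => f p.1 p.2.1 p.2.2)
      (Icc 0 1 ×ˢ (univ : Set ℝ) ×ˢ (univ : Set ℝ))) (k : ℕ) :
    ContDiffOn ℝ 2 (psiC f φ b1 b2 b3 k) (Icc 0 1) := by
  have hmem : ∀ u v : ℝ → ℝ, MapsTo (fun t => (t, u t, v t)) (Icc 0 1)
      (Icc 0 1 ×ˢ (univ : Set ℝ) ×ˢ (univ : Set ℝ)) := fun _ _ _ ht => ⟨ht, trivial, trivial⟩
  induction k with
  | zero =>
    exact hf.comp (contDiffOn_id.prodMk (contDiffOn_const.prodMk contDiffOn_const)) (hmem _ _)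
  | succ k ih =>
    have hu : ContDiffOn ℝ 2 (uC f φ b1 b2 b3 k) (Icc 0 1) :=
      (ContDiff.contDiffOn (by unfold gq; fun_prop)).add
        (contDiffOn_integral_G01_mul ih.continuousOn)
    exact hf.comp (contDiffOn_id.prodMk (hu.prodMk (hu.comp hφ hφm))) (hmem _ _)

lemma UD_eq (N k i : ℕ) : UD f φ b1 b2 b3 N k i = gq b1 b2 b3 (i / N)
    + trapSum N (fun j => G01 (i / N) (j / N) * PsiD f φ b1 b2 b3 N k j) := by
  simp only [UD, trapSum, mul_assoc]

lemma VD_eq (N k i : ℕ) : VD f φ b1 b2 b3 N k i = gq b1 b2 b3 (φ (i / N))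
    + trapSum N (fun j => G01 (φ (i / N)) (j / N) * PsiD f φ b1 b2 b3 N k j) := by
  simp only [VD, trapSum, mul_assoc]

end Iteration

/-- For every fixed `k`, the discrete iterate `Ψ_k` approximates the continuous iterate `ψ_k`
at the grid nodes with accuracy `O(h²)`, `h = 1/N`. -/
theorem discrete_iterates_psi_second_order
    (b1 b2 b3 : ℝ) (φ : ℝ → ℝ) (f : ℝ → ℝ → ℝ → ℝ)
    (hφ : ContDiffOn ℝ 2 φ (Icc 0 1)) (hφm : MapsTo φ (Icc 0 1) (Icc 0 1))
    (hf : ContDiffOn ℝ 2 (fun p : ℝ × ℝ × ℝ => f p.1 p.2.1 p.2.2)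
      (Icc 0 1 ×ˢ (univ : Set ℝ) ×ˢ (univ : Set ℝ)))
    (L1 L2 : ℝ) (hL1 : 0 ≤ L1) (hL2 : 0 ≤ L2)
    (hLip : ∀ t ∈ Icc (0:ℝ) 1, ∀ u1 u2 v1 v2 : ℝ,
      |f t u2 v2 - f t u1 v1| ≤ L1 * |u2 - u1| + L2 * |v2 - v1|) :
    ∀ k : ℕ, ∃ C > (0:ℝ), ∀ N : ℕ, 1 ≤ N → ∀ i : ℕ, i ≤ N →
      |PsiD f φ b1 b2 b3 N k i - psiC f φ b1 b2 b3 k ((i : ℝ) / N)|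
        ≤ C * (1 / (N:ℝ)) ^ 2 := by
  intro k
  induction k with
  | zero => exact ⟨1, one_pos, fun N _ i _ => by simp [PsiD, psiC]⟩
  | succ k ih =>
    obtain ⟨C, hC, hk⟩ := ih
    obtain ⟨M, hM⟩ := exists_abs_trapSum_G01_mul_sub_integral_le (contDiffOn_psiC hφ hφm hf k)
    refine ⟨(L1 + L2) * (C + M) + 1, by positivity, fun N hN i hi => ?_⟩
    have hN0 : N ≠ 0 := by omega
    have hu : ∀ x ∈ Icc (0 : ℝ) 1, |gq b1 b2 b3 x
        + trapSum N (fun j => G01 x (j / N) * PsiD f φ b1 b2 b3 N k j) - uC f φ b1 b2 b3 k x|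
        ≤ (C + M) * (1 / (N : ℝ)) ^ 2 := fun x hx => by
      rw [uC, add_sub_add_left_eq_sub, add_mul]
      exact abs_trapSum_G01_mul_sub_integral_le hN0 hx (hM x hx N hN0) (hk N hN)
    have hti := natCast_div_mem_Icc hi
    calc |PsiD f φ b1 b2 b3 N (k + 1) i - psiC f φ b1 b2 b3 (k + 1) (i / N)|
        ≤ L1 * |UD f φ b1 b2 b3 N k i - uC f φ b1 b2 b3 k (i / N)|
          + L2 * |VD f φ b1 b2 b3 N k i - vC f φ b1 b2 b3 k (i / N)| := by
          rw [PsiD_succ, psiC_succ]; exact hLip _ hti _ _ _ _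
      _ ≤ L1 * ((C + M) * (1 / (N : ℝ)) ^ 2) + L2 * ((C + M) * (1 / (N : ℝ)) ^ 2) := by
          rw [UD_eq, VD_eq, vC]
          gcongr
          exacts [hu _ hti, hu _ (hφm hti)]
      _ ≤ ((L1 + L2) * (C + M) + 1) * (1 / (N : ℝ)) ^ 2 := by
          nlinarith [sq_nonneg (1 / (N : ℝ))]
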